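/- Let σ : X → Y be a strong formal subdivision between finite lower Eulerian posets X and Y with rank functions ρ_X and ρ_Y. Then rank(Cyl(σ)) = rank(X) + 1. Moreover, X is graded if and only if Y is graded, if and only if Cyl(σ) is graded. -/

import Mathlib

namespace SFSPaper

variable {α β : Type*}

/-- `ρ` is a rank function: it increases by exactly one along covering relations. -/
def IsRankFunction [Preorder α] (ρ : α → ℤ) : Prop :=
  ∀ ⦃z z' : α⦄, z ⋖ z' → ρ z' = ρ z + 1

/-- `σ` is rank-increasing with respect to the rank functions `ρX` and `ρY`. -/
def RankIncreasing [Preorder α] [Preorder β] (ρX : α → ℤ) (ρY : β → ℤ) (σ : α → β) : Prop :=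
  ∀ x : α, ρX x ≤ ρY (σ x)

/-- `σ` is strongly surjective. -/
def StronglySurjective [Preorder α] [Preorder β] (ρX : α → ℤ) (ρY : β → ℤ) (σ : α → β) : Prop :=
  Function.Surjective σ ∧
    ∀ (x : α) (y : β), σ x ≤ y → ∃ x' : α, x ≤ x' ∧ ρX x' = ρY y ∧ σ x' = y

/-- The alternating sum `∑_{z ≤ w ≤ z'} (-1)^(ρ w)`. -/
noncomputable def intervalEulerSum [Preorder α] (ρ : α → ℤ) (z z' : α) : ℚ :=
  ∑ᶠ (w : α) (_ : z ≤ w ∧ w ≤ z'), (-1 : ℚ) ^ ρ w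

/-- A poset is lower Eulerian with respect to `ρ` if `ρ` is a rank function, there is a
unique minimal (i.e. least) element, and every nontrivial interval has as many elements of even
rank as of odd rank. -/
def LowerEulerian [PartialOrder α] (ρ : α → ℤ) : Prop :=
  IsRankFunction ρ ∧ (∃ b : α, ∀ z : α, b ≤ z) ∧
    ∀ z z' : α, z < z' → intervalEulerSum ρ z z' = 0

/-- Eulerian: lower Eulerian with a unique maximal element. -/
def Eulerian [PartialOrder α] (ρ : α → ℤ) : Prop :=
  LowerEulerian ρ ∧ ∃ t : α, ∀ z : α, z ≤ t

/-- Strong formal subdivision. -/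
def StrongFormalSubdivision [PartialOrder α] [PartialOrder β]
    (ρX : α → ℤ) (ρY : β → ℤ) (σ : α → β) : Prop :=
  Monotone σ ∧ RankIncreasing ρX ρY σ ∧ StronglySurjective ρX ρY σ ∧
    ∀ (x : α) (y : β), σ x ≤ y →
      (∑ᶠ (x' : α) (_ : x ≤ x' ∧ σ x' = y), (-1 : ℚ) ^ (ρY y - ρX x')) = 1

/-- `q` is join-admissible: every `z` has a join with `q`. -/
def JoinAdmissible [Preorder α] (q : α) : Prop :=
  ∀ z : α, ∃ j : α, IsLeast {w : α | z ≤ w ∧ q ≤ w} j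

/-- The rank of a poset: the maximal length of a chain `z_0 < z_1 < ⋯ < z_s`. -/
noncomputable def posetRank (α : Type*) [Preorder α] : ℕ :=
  sSup {n : ℕ | ∃ c : Fin (n + 1) → α, StrictMono c}

/-- A poset is graded if all of its maximal chains have the same length (cardinality). -/
def GradedPoset (α : Type*) [Preorder α] : Prop :=
  ∀ s t : Set α, IsMaxChain (· ≤ ·) s → IsMaxChain (· ≤ ·) t → s.ncard = t.ncard


variable {α β : Type*}

/-- The order relation of the non-Hausdorff mapping cylinder of `σ : α → β` on `α ⊕ β`. -/
def cylLE [LE α] [LE β] (σ : α → β) : α ⊕ β → α ⊕ β → Prop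
  | Sum.inl x, Sum.inl x' => x ≤ x'
  | Sum.inl x, Sum.inr y => σ x ≤ y
  | Sum.inr _, Sum.inl _ => False
  | Sum.inr y, Sum.inr y' => y ≤ y'

/-- The non-Hausdorff mapping cylinder of an order-preserving map `σ : α → β`, as a
partial order on `α ⊕ β`. -/
def cylPartialOrder [PartialOrder α] [PartialOrder β] (σ : α → β) (hσ : Monotone σ) :
    PartialOrder (α ⊕ β) where
  le := cylLE σ
  lt a b := cylLE σ a b ∧ ¬ cylLE σ b a
  lt_iff_le_not_ge _ _ := Iff.rfl
  le_refl := by rintro (x | y) <;> simp [cylLE]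
  le_trans := by
    rintro (x | y) (x' | y') (x'' | y'') hab hbc <;> simp only [cylLE] at * <;>
      first
        | exact hab.trans hbc
        | exact (hσ hab).trans hbc
  le_antisymm := by
    rintro (x | y) (x' | y') hab hba <;> simp only [cylLE] at *
    · exact congrArg Sum.inl (le_antisymm hab hba)
    · exact congrArg Sum.inr (le_antisymm hab hba)

/-- The rank function on the mapping cylinder: `ρX` on `X` and `ρY + 1` on `Y`. -/
def cylRank (ρX : α → ℤ) (ρY : β → ℤ) : α ⊕ β → ℤ :=
  Sum.elim ρX fun y => ρY y + 1


/-!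
For a rank function `ρ` on a finite poset with least element `b`, every maximal chain ending in
a maximal element `m` has exactly `ρ m - ρ b + 1` elements. Hence the rank of the poset is
`max ρ - ρ b`, attained at a maximal element, and the poset is graded iff all maximal elements
have the same rank. A strongly surjective `σ` maps maximal elements of `X` to maximal elements of
`Y` of the same rank, and by monotonicity every maximal element of `Y` arises this way. The
maximal elements of `Cyl(σ)` are those of `Y`, whose rank in the cylinder is shifted by one, so
all three posets have the same set of maximal ranks up to this shift.
-/

theorem exists_le_isMax [Preorder α] [Finite α] (a : α) : ∃ m, a ≤ m ∧ IsMax m := by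
  obtain ⟨m, ham, hm⟩ := Finite.exists_le_maximal (p := fun _ : α => True) trivial
  exact ⟨m, ham, maximal_true.1 hm⟩

theorem exists_isMaxChain_mem [PartialOrder α] (a : α) :
    ∃ s, IsMaxChain (· ≤ ·) s ∧ a ∈ s := by
  obtain ⟨s, hs, has⟩ := (Set.subsingleton_singleton (a := a)).isChain.exists_maxChain
  exact ⟨s, hs, has rfl⟩

theorem _root_.IsMaxChain.mem_of_isBot [PartialOrder α] {s : Set α} {b : α}
    (hs : IsMaxChain (· ≤ ·) s) (hb : IsBot b) : b ∈ s :=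
  Flag.mem_iff_forall_le_or_ge (s := .ofIsMaxChain s hs).2 fun z _ => .inl (hb z)

section RankFunction

variable [PartialOrder α] {ρ : α → ℤ}

theorem IsRankFunction.restrict_flag (hρ : IsRankFunction ρ) (s : Flag α) :
    IsRankFunction fun z : s => ρ z :=
  fun _ _ h => hρ (Flag.coe_covBy_coe.2 h)

variable [Finite α]

theorem IsRankFunction.strictMono (hρ : IsRankFunction ρ) : StrictMono ρ := by
  intro x y hxy
  induction x using WellFoundedGT.induction with
  | _ x ih =>
    obtain ⟨z, hxz, hzy⟩ := exists_covBy_le_of_lt hxy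
    have hz : ρ z = ρ x + 1 := hρ hxz
    rcases hzy.eq_or_lt with rfl | hzy
    · omega
    · have := ih z hxz.lt hzy
      omega

theorem IsRankFunction.Icc_subset_image_Icc (hρ : IsRankFunction ρ) {x y : α} (hxy : x ≤ y) :
    Set.Icc (ρ x) (ρ y) ⊆ ρ '' Set.Icc x y := by
  rintro k ⟨hxk, hky⟩
  obtain ⟨e, -, ⟨⟨hxe, hey⟩, hek⟩, he⟩ :=
    Finite.exists_le_maximal (p := fun e => (x ≤ e ∧ e ≤ y) ∧ ρ e ≤ k) ⟨⟨le_rfl, hxy⟩, hxk⟩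
  refine ⟨e, ⟨hxe, hey⟩, hek.antisymm (not_lt.1 fun hlt => ?_)⟩
  obtain ⟨c, hec, hcy⟩ := exists_covBy_le_of_lt (hey.lt_of_ne (by rintro rfl; omega))
  have hc : ρ c = ρ e + 1 := hρ hec
  exact hec.lt.not_ge (he ⟨⟨hxe.trans hec.le, hcy⟩, by omega⟩ hec.le)

end RankFunction

theorem IsRankFunction.natCard_eq {L : Type*} [LinearOrder L] [Finite L] {ρ : L → ℤ}
    (hρ : IsRankFunction ρ) {a b : L} (ha : IsBot a) (hb : IsTop b) :
    (Nat.card L : ℤ) = ρ b - ρ a + 1 := by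
  have hrange : Set.range ρ = Set.Icc (ρ a) (ρ b) := by
    refine subset_antisymm ?_ fun k hk => ?_
    · rintro _ ⟨z, rfl⟩
      exact ⟨hρ.strictMono.monotone (ha z), hρ.strictMono.monotone (hb z)⟩
    · obtain ⟨z, -, rfl⟩ := hρ.Icc_subset_image_Icc (ha b) hk
      exact ⟨z, rfl⟩
  have hab : ρ a ≤ ρ b := hρ.strictMono.monotone (ha b)
  rw [← Nat.card_range_of_injective hρ.strictMono.injective, hrange, Nat.card_coe_set_eq,
    Set.ncard_eq_toFinset_card', Set.toFinset_Icc, Int.card_Icc]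
  omega

section MaxChain

variable [PartialOrder α] [Finite α] {ρ : α → ℤ} {b : α} {s : Set α}

theorem _root_.IsMaxChain.exists_isMax_mem (hs : IsMaxChain (· ≤ ·) s) (hb : IsBot b) :
    ∃ m ∈ s, IsMax m := by
  let F := Flag.ofIsMaxChain s hs
  obtain ⟨m, -, hm⟩ := exists_le_isMax (⟨b, hs.mem_of_isBot hb⟩ : F)
  exact ⟨m, m.2, Flag.isMax_coe.2 hm⟩

theorem _root_.IsMaxChain.exists_strictMono_fin (hs : IsMaxChain (· ≤ ·) s) :
    ∃ c : Fin s.ncard → α, StrictMono c := by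
  classical
  let F := Flag.ofIsMaxChain s hs
  have : Fintype F := Fintype.ofFinite F
  have hcard : Fintype.card F = s.ncard := by
    rw [← Nat.card_eq_fintype_card]
    exact Nat.card_coe_set_eq s
  let e := Fintype.orderIsoFinOfCardEq F hcard
  exact ⟨fun i => e i, (Subtype.strictMono_coe _).comp e.strictMono⟩

theorem IsRankFunction.ncard_eq_of_isMaxChain (hρ : IsRankFunction ρ) (hb : IsBot b)
    (hs : IsMaxChain (· ≤ ·) s) {m : α} (hms : m ∈ s) (hm : IsMax m) :
    (s.ncard : ℤ) = ρ m - ρ b + 1 := by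
  classical
  let F := Flag.ofIsMaxChain s hs
  have hcard := (hρ.restrict_flag F).natCard_eq (a := ⟨b, hs.mem_of_isBot hb⟩) (b := ⟨m, hms⟩)
    (fun z => hb z) (Flag.isMax_coe.1 hm).isTop
  rwa [← Nat.card_coe_set_eq]

end MaxChain

def maxRanks [Preorder α] (ρ : α → ℤ) : Set ℤ :=
  ρ '' {m | IsMax m}

theorem exists_isGreatest_maxRanks [Preorder α] [Finite α] [Nonempty α] (ρ : α → ℤ) :
    ∃ r, IsGreatest (maxRanks ρ) r := by
  obtain ⟨a⟩ := ‹Nonempty α›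
  obtain ⟨m₀, -, hm₀⟩ := exists_le_isMax a
  obtain ⟨m, hm, hmax⟩ := Set.exists_max_image {m : α | IsMax m} ρ (Set.toFinite _) ⟨m₀, hm₀⟩
  exact ⟨ρ m, ⟨m, hm, rfl⟩, by rintro _ ⟨m', hm', rfl⟩; exact hmax m' hm'⟩

section Graded

variable [PartialOrder α] [Finite α] {ρ : α → ℤ} {b : α}

theorem IsRankFunction.posetRank_eq (hρ : IsRankFunction ρ) (hb : IsBot b) {r : ℤ}
    (hr : IsGreatest (maxRanks ρ) r) : (posetRank α : ℤ) = r - ρ b := by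
  obtain ⟨⟨m, hm, rfl⟩, hr⟩ := hr
  have hbm : ρ b ≤ ρ m := hρ.strictMono.monotone (hb m)
  suffices IsGreatest {n : ℕ | ∃ c : Fin (n + 1) → α, StrictMono c} (ρ m - ρ b).toNat by
    rw [posetRank, this.csSup_eq]
    omega
  constructor
  · obtain ⟨s, hs, hms⟩ := exists_isMaxChain_mem m
    obtain ⟨c, hc⟩ := hs.exists_strictMono_fin
    have hcard : s.ncard = (ρ m - ρ b).toNat + 1 := by
      have := hρ.ncard_eq_of_isMaxChain hb hs hms hm
      omega
    exact ⟨c ∘ Fin.cast hcard.symm, hc.comp (Fin.cast_strictMono _)⟩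
  · rintro n ⟨c, hc⟩
    obtain ⟨m', hcm', hm'⟩ := exists_le_isMax (c (Fin.last n))
    have hlen := (LTSeries.mk n (ρ ∘ c) (hρ.strictMono.comp hc)).head_add_length_le_int
    have h₁ := hρ.strictMono.monotone (hb (c 0))
    have h₂ := hρ.strictMono.monotone hcm'
    have h₃ := hr ⟨m', hm', rfl⟩
    change ρ (c 0) + n ≤ ρ (c (Fin.last n)) at hlen
    omega

theorem IsRankFunction.gradedPoset_iff (hρ : IsRankFunction ρ) (hb : IsBot b) :
    GradedPoset α ↔ (maxRanks ρ).Subsingleton := by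
  constructor
  · rintro hg _ ⟨m, hm, rfl⟩ _ ⟨m', hm', rfl⟩
    obtain ⟨s, hs, hms⟩ := exists_isMaxChain_mem m
    obtain ⟨t, ht, hmt⟩ := exists_isMaxChain_mem m'
    have := hg s t hs ht
    have := hρ.ncard_eq_of_isMaxChain hb hs hms hm
    have := hρ.ncard_eq_of_isMaxChain hb ht hmt hm'
    omega
  · intro h s t hs ht
    obtain ⟨m, hms, hm⟩ := hs.exists_isMax_mem hb
    obtain ⟨m', hmt, hm'⟩ := ht.exists_isMax_mem hb
    have := h ⟨m, hm, rfl⟩ ⟨m', hm', rfl⟩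
    have := hρ.ncard_eq_of_isMaxChain hb hs hms hm
    have := hρ.ncard_eq_of_isMaxChain hb ht hmt hm'
    omega

end Graded

section StronglySurjective

variable [PartialOrder α] [PartialOrder β] {ρX : α → ℤ} {ρY : β → ℤ} {σ : α → β}

theorem StronglySurjective.isMax_map (hσ : StronglySurjective ρX ρY σ) {x : α} (hx : IsMax x) :
    IsMax (σ x) ∧ ρY (σ x) = ρX x := by
  have hfiber : ∀ y, σ x ≤ y → σ x = y ∧ ρX x = ρY y := by
    intro y hy
    obtain ⟨x', hxx', hρ, rfl⟩ := hσ.2 x y hy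
    obtain rfl := hx.eq_of_le hxx'
    exact ⟨rfl, hρ⟩
  exact ⟨fun y hy => (hfiber y hy).1.ge, (hfiber _ le_rfl).2.symm⟩

theorem StronglySurjective.maxRanks_eq [Finite α] (hmono : Monotone σ)
    (hσ : StronglySurjective ρX ρY σ) : maxRanks ρX = maxRanks ρY := by
  refine subset_antisymm ?_ ?_
  · rintro _ ⟨x, hx, rfl⟩
    exact ⟨σ x, (hσ.isMax_map hx).1, (hσ.isMax_map hx).2⟩
  · rintro _ ⟨y, hy, rfl⟩
    obtain ⟨x, rfl⟩ := hσ.1 y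
    obtain ⟨x', hxx', hx'⟩ := exists_le_isMax x
    obtain hσx' : σ x = σ x' := hy.eq_of_le (hmono hxx')
    exact ⟨x', hx', hσx' ▸ (hσ.isMax_map hx').2.symm⟩

end StronglySurjective

/-- A synonym of `α ⊕ β` carrying the cylinder order instead of the order of the disjoint sum. -/
def Cyl [PartialOrder α] [PartialOrder β] (σ : α → β) (_ : Monotone σ) : Type _ :=
  α ⊕ β

namespace Cyl

variable [PartialOrder α] [PartialOrder β] {σ : α → β} {hσ : Monotone σ}

instance : PartialOrder (Cyl σ hσ) :=
  cylPartialOrder σ hσ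

instance [Finite α] [Finite β] : Finite (Cyl σ hσ) :=
  inferInstanceAs (Finite (α ⊕ β))

def inl (x : α) : Cyl σ hσ :=
  Sum.inl x

def inr (y : β) : Cyl σ hσ :=
  Sum.inr y

theorem inl_le_inl {x x' : α} : (.inl x : Cyl σ hσ) ≤ .inl x' ↔ x ≤ x' :=
  Iff.rfl

theorem inr_le_inr {y y' : β} : (.inr y : Cyl σ hσ) ≤ .inr y' ↔ y ≤ y' :=
  Iff.rfl

theorem inl_le_inr {x : α} {y : β} : (.inl x : Cyl σ hσ) ≤ .inr y ↔ σ x ≤ y :=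
  Iff.rfl

theorem not_inr_le_inl {x : α} {y : β} : ¬(.inr y : Cyl σ hσ) ≤ .inl x :=
  id

def inlEmbedding : α ↪o Cyl σ hσ :=
  OrderEmbedding.ofMapLEIff inl fun _ _ => inl_le_inl

def inrEmbedding : β ↪o Cyl σ hσ :=
  OrderEmbedding.ofMapLEIff inr fun _ _ => inr_le_inr

theorem isBot_inl {b : α} (hb : IsBot b) (hsurj : Function.Surjective σ) :
    IsBot (.inl b : Cyl σ hσ) := by
  rintro (x | y)
  · exact inl_le_inl.2 (hb x)
  · obtain ⟨x, rfl⟩ := hsurj y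
    exact inl_le_inr.2 (hσ (hb x))

theorem not_isMax_inl (x : α) : ¬IsMax (.inl x : Cyl σ hσ) :=
  fun h => not_inr_le_inl (h (inl_le_inr.2 le_rfl : (.inl x : Cyl σ hσ) ≤ .inr (σ x)))

theorem isMax_inr_iff {y : β} : IsMax (.inr y : Cyl σ hσ) ↔ IsMax y := by
  refine ⟨fun h z hz => inr_le_inr.1 (h (inr_le_inr.2 hz)), fun h => ?_⟩
  rintro (x | z) hz
  · exact absurd hz not_inr_le_inl
  · exact inr_le_inr.2 (h hz)

variable {ρX : α → ℤ} {ρY : β → ℤ}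

theorem rank_eq_of_inl_covBy_inr (hss : StronglySurjective ρX ρY σ) {x : α} {y : β}
    (h : (.inl x : Cyl σ hσ) ⋖ .inr y) : ρX x = ρY y := by
  obtain ⟨x', hxx', hρ, rfl⟩ := hss.2 x y (inl_le_inr.1 h.le)
  -- the lift `x'` lies between `x` and `y` in the cylinder
  obtain rfl : x = x' := by
    by_contra hne
    exact h.2 ((inlEmbedding (hσ := hσ)).lt_iff_lt.2 (hxx'.lt_of_ne hne))
      (lt_of_le_not_ge (inl_le_inr.2 le_rfl) not_inr_le_inl)
  exact hρ

theorem isRankFunction_cylRank (hρX : IsRankFunction ρX) (hρY : IsRankFunction ρY)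
    (hss : StronglySurjective ρX ρY σ) :
    IsRankFunction fun z : Cyl σ hσ => cylRank ρX ρY z := by
  rintro (x | y) (x' | y') h
  · exact hρX (h.of_image (a := x) (b := x') inlEmbedding)
  · exact congrArg (· + 1) (rank_eq_of_inl_covBy_inr hss h).symm
  · exact absurd h.le not_inr_le_inl
  · exact congrArg (· + 1) (hρY (h.of_image (a := y) (b := y') inrEmbedding))

theorem maxRanks_cylRank :
    maxRanks (fun z : Cyl σ hσ => cylRank ρX ρY z) = (· + 1) '' maxRanks ρY := by
  ext k
  constructor
  · rintro ⟨x | y, hz, rfl⟩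
    · exact absurd hz (not_isMax_inl x)
    · exact ⟨ρY y, ⟨y, isMax_inr_iff.1 hz, rfl⟩, rfl⟩
  · rintro ⟨_, ⟨y, hy, rfl⟩, rfl⟩
    exact ⟨.inr y, isMax_inr_iff.2 hy, rfl⟩

end Cyl

/-- For a strong formal subdivision `σ : X → Y` between finite lower
Eulerian posets, `rank(Cyl(σ)) = rank(X) + 1`; moreover `X` is graded iff `Y` is graded
iff `Cyl(σ)` is graded. -/
theorem cyl_rank_and_graded {X Y : Type*} [PartialOrder X] [PartialOrder Y]
    [Finite X] [Finite Y]
    (ρX : X → ℤ) (ρY : Y → ℤ)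
    (hX : LowerEulerian ρX) (hY : LowerEulerian ρY)
    (σ : X → Y) (hσ : StrongFormalSubdivision ρX ρY σ) :
    @posetRank (X ⊕ Y) (cylPartialOrder σ hσ.1).toPreorder = posetRank X + 1 ∧
    (GradedPoset X ↔ GradedPoset Y) ∧
    (GradedPoset X ↔ @GradedPoset (X ⊕ Y) (cylPartialOrder σ hσ.1).toPreorder) := by
  obtain ⟨hρX, ⟨bX, hbX⟩, -⟩ := hX
  obtain ⟨hρY, ⟨bY, hbY⟩, -⟩ := hY
  have hss : StronglySurjective ρX ρY σ := hσ.2.2.1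
  have hρC := Cyl.isRankFunction_cylRank (hσ := hσ.1) hρX hρY hss
  have hbC : IsBot (.inl bX : Cyl σ hσ.1) := Cyl.isBot_inl hbX hss.1
  have hXY : maxRanks ρX = maxRanks ρY := hss.maxRanks_eq hσ.1
  have hXC : maxRanks (fun z : Cyl σ hσ.1 => cylRank ρX ρY z) = (· + 1) '' maxRanks ρX :=
    hXY ▸ Cyl.maxRanks_cylRank
  have : Nonempty X := ⟨bX⟩
  obtain ⟨r, hr⟩ := exists_isGreatest_maxRanks ρX
  refine ⟨?_, ?_, ?_⟩
  · have hC := hρC.posetRank_eq hbC (hXC ▸ (strictMono_id.add_const (1 : ℤ)).map_isGreatest.2 hr)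
    have := hρX.posetRank_eq hbX hr
    change posetRank (Cyl σ hσ.1) = posetRank X + 1
    change _ = r + 1 - ρX bX at hC
    omega
  · rw [hρX.gradedPoset_iff hbX, hρY.gradedPoset_iff hbY, hXY]
  · change _ ↔ GradedPoset (Cyl σ hσ.1)
    rw [hρX.gradedPoset_iff hbX, hρC.gradedPoset_iff hbC, hXC,
      (add_left_injective 1).subsingleton_image_iff]

end SFSPaper
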